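/- arXiv:1605.04777 — 3 statements merged into one kernel-verified Lean document; each statement's English description precedes it below -/
import Mathlib

section
/- For 0 ≤ x < 1, the Rogers dilogarithm satisfies L(x/(1+x)) = -Li₂(-x) - (1/2)·log x · log(1+x), where L(x) = Li₂(x) + (1/2)·log x · log(1-x) and Li₂(x) = -∫₀ˣ log(1-y)/y dy. (For x = 0 the logarithmic terms are interpreted as 0 by continuity.) -/
open MeasureTheory Real

/-- The Euler dilogarithm `Li₂(x) = -∫₀ˣ log(1-y)/y dy`. -/
noncomputable def Li2 (x : ℝ) : ℝ := -∫ y in (0:ℝ)..x, Real.log (1 - y) / y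

/-- The Rogers dilogarithm `L(x) = Li₂(x) + (1/2)·log x·log(1-x)`
(the logarithmic term vanishes at `x = 0` since `Real.log 0 = 0`). -/
noncomputable def RL (x : ℝ) : ℝ := Li2 x + (1/2) * Real.log x * Real.log (1 - x)

/-!
The statement is Landen's identity `Li₂(t/(1+t)) + Li₂(-t) = -½ log²(1+t)`, rewritten with
`log(1 - t/(1+t)) = -log(1+t)` and `log(t/(1+t)) = log t - log(1+t)`. Landen's identity holds
because its left side minus its right side is continuous on `(-1/2, 1)`, has derivative zero
off `0`, and vanishes at `0`.
-/

open Set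

lemma abs_log_one_sub_div_le {y : ℝ} (hy : |y| < 1) : |log (1 - y) / y| ≤ 1 / (1 - |y|) := by
  rcases eq_or_ne y 0 with rfl | hy0
  · simp
  have h := abs_log_sub_add_sum_range_le hy 0
  rw [Finset.sum_range_zero, zero_add, zero_add, pow_one, le_div_iff₀ (by linarith)] at h
  rw [abs_div, div_le_div_iff₀ (abs_pos.mpr hy0) (by linarith)]
  linarith

lemma measurable_log_one_sub_div : Measurable fun y : ℝ => log (1 - y) / y := by fun_prop

lemma intervalIntegrable_log_one_sub_div {a b : ℝ} (ha : |a| < 1) (hb : |b| < 1) :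
    IntervalIntegrable (fun y => log (1 - y) / y) volume a b := by
  have hr : max |a| |b| < 1 := max_lt ha hb
  rw [intervalIntegrable_iff]
  refine Measure.integrableOn_of_bounded (M := 1 / (1 - max |a| |b|)) measure_Ioc_lt_top.ne
    measurable_log_one_sub_div.aestronglyMeasurable ?_
  filter_upwards [ae_restrict_mem measurableSet_uIoc] with y hy
  have hyr : |y| ≤ max |a| |b| := by
    rcases mem_uIcc.mp (uIoc_subset_uIcc hy) with h | h
    · exact abs_le_max_abs_abs h.1 h.2
    · exact max_comm |b| |a| ▸ abs_le_max_abs_abs h.1 h.2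
  calc ‖log (1 - y) / y‖ ≤ 1 / (1 - |y|) := abs_log_one_sub_div_le (hyr.trans_lt hr)
    _ ≤ 1 / (1 - max |a| |b|) := by gcongr

lemma hasDerivAt_Li2 {t : ℝ} (ht0 : t ≠ 0) (ht : t ∈ Ioo (-1 : ℝ) 1) :
    HasDerivAt Li2 (-(log (1 - t) / t)) t := by
  have h1t : 1 - t ≠ 0 := by linarith [ht.2]
  exact (intervalIntegral.integral_hasDerivAt_right
    (intervalIntegrable_log_one_sub_div (by simp) (abs_lt.mpr ht))
    measurable_log_one_sub_div.stronglyMeasurable.stronglyMeasurableAtFilter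
    (by fun_prop (disch := assumption))).neg

/- The integrand takes the junk value `0` at `y = 0` instead of its limit `-1`, so continuity of
`Li2` at `0` comes from the boundedness of the integrand, not from `hasDerivAt_Li2`. -/
lemma continuousOn_Li2 : ContinuousOn Li2 (Ioo (-1) 1) := by
  intro t ht
  obtain ⟨r, htr, hr1⟩ := exists_between (abs_lt.mpr ht)
  have hr0 : 0 < r := (abs_nonneg t).trans_lt htr
  have hrr : -r ≤ r := by linarith
  have hcont : ContinuousOn Li2 (Icc (-r) r) := by
    rw [← uIcc_of_le hrr]
    exact (intervalIntegral.continuousOn_primitive_interval'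
      (intervalIntegrable_log_one_sub_div (by rwa [abs_neg, abs_of_pos hr0])
        (by rwa [abs_of_pos hr0]))
      (by rw [uIcc_of_le hrr]; constructor <;> linarith)).neg
  refine (hcont.continuousAt (Icc_mem_nhds ?_ ?_)).continuousWithinAt <;>
    linarith [neg_abs_le t, le_abs_self t]

lemma log_one_sub_div_one_add {t : ℝ} (ht : 1 + t ≠ 0) :
    log (1 - t / (1 + t)) = -log (1 + t) := by
  rw [← log_inv]
  congr 1
  field_simp
  ring

lemma div_one_add_mem_Ioo {t : ℝ} (ht : t ∈ Ioo (-1/2 : ℝ) 1) : t / (1 + t) ∈ Ioo (-1 : ℝ) 1 := by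
  obtain ⟨h1, h2⟩ := ht
  constructor
  · rw [lt_div_iff₀ (by linarith)]; linarith
  · rw [div_lt_one (by linarith)]; linarith

lemma neg_mem_Ioo_of_mem_Ioo {t : ℝ} (ht : t ∈ Ioo (-1/2 : ℝ) 1) : -t ∈ Ioo (-1 : ℝ) 1 :=
  ⟨by linarith [ht.2], by linarith [ht.1]⟩

lemma hasDerivAt_landen {t : ℝ} (ht0 : t ≠ 0) (ht : t ∈ Ioo (-1/2 : ℝ) 1) :
    HasDerivAt (fun s => Li2 (s / (1 + s)) + Li2 (-s) + (1/2) * log (1 + s) ^ 2) 0 t := by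
  have h1t : 1 + t ≠ 0 := by linarith [ht.1]
  have hq : HasDerivAt (fun s => s / (1 + s)) (1 / (1 + t) ^ 2) t := by
    refine ((hasDerivAt_id t).div ((hasDerivAt_id t).const_add 1) h1t).congr_deriv ?_
    simp only [id]
    ring
  have hL1 := (hasDerivAt_Li2 (div_ne_zero ht0 h1t) (div_one_add_mem_Ioo ht)).comp t hq
  have hL2 := (hasDerivAt_Li2 (neg_ne_zero.mpr ht0) (neg_mem_Ioo_of_mem_Ioo ht)).comp t
    (hasDerivAt_neg t)
  have hlog := ((((hasDerivAt_id t).const_add 1).log h1t).pow 2).const_mul (1/2 : ℝ)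
  refine ((hL1.add hL2).add hlog).congr_deriv ?_
  simp only [id]
  rw [log_one_sub_div_one_add h1t, sub_neg_eq_add]
  -- `log(1+t) · (1/(t(1+t)) - 1/t + 1/(1+t)) = 0`
  field_simp
  ring

theorem Li2_div_one_add_add_Li2_neg {t : ℝ} (ht : t ∈ Ioo (-1/2 : ℝ) 1) :
    Li2 (t / (1 + t)) + Li2 (-t) = -(1/2) * log (1 + t) ^ 2 := by
  set g := fun s => Li2 (s / (1 + s)) + Li2 (-s) + (1/2) * log (1 + s) ^ 2
  have hsub : uIcc 0 t ⊆ Ioo (-1/2 : ℝ) 1 := ordConnected_Ioo.uIcc_subset (by norm_num) ht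
  have hcont : ContinuousOn g (Ioo (-1/2 : ℝ) 1) := by
    have h1s : ∀ s ∈ Ioo (-1/2 : ℝ) 1, 1 + s ≠ 0 := fun s hs => by linarith [hs.1]
    exact ((continuousOn_Li2.comp (continuousOn_id.div (continuousOn_const.add continuousOn_id)
      h1s) fun _ => div_one_add_mem_Ioo).add
      (continuousOn_Li2.comp continuousOn_neg fun _ => neg_mem_Ioo_of_mem_Ioo)).add
      (continuousOn_const.mul (((continuousOn_const.add continuousOn_id).log h1s).pow 2))
  have hderiv : ∀ s ∈ Ioo (min 0 t) (max 0 t) \ ∅, HasDerivAt g 0 s := fun s hs => by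
    have hs0 : s ≠ 0 := by
      rintro rfl
      have h := hs.1
      simp only [mem_Ioo, min_lt_iff, lt_max_iff, lt_self_iff_false, false_or] at h
      linarith [h.1, h.2]
    exact hasDerivAt_landen hs0 (hsub (Ioo_subset_Icc_self hs.1))
  have h := integral_eq_of_hasDerivAt_off_countable g 0 countable_empty (hcont.mono hsub) hderiv
    intervalIntegrable_const
  have hg0 : g 0 = 0 := by simp [g, Li2]
  simp only [Pi.zero_apply, intervalIntegral.integral_zero, hg0, sub_zero, g] at h
  linarith

theorem rogers_alt_expression (x : ℝ) (hx0 : 0 ≤ x) (hx1 : x < 1) :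
    RL (x / (1 + x)) = -Li2 (-x) - (1/2) * Real.log x * Real.log (1 + x) := by
  rcases eq_or_ne x 0 with rfl | hx
  · simp [RL, Li2]
  have h1x : 1 + x ≠ 0 := by linarith
  have hlanden := Li2_div_one_add_add_Li2_neg (t := x) ⟨by linarith, hx1⟩
  rw [RL, log_one_sub_div_one_add h1x, log_div hx h1x]
  linear_combination hlanden
end

section
/- Let C be the multiplicative abelian group of positive differentiable functions on [0,1], and let g₁,…,g_k, h₁,…,h_k ∈ C. If f₁,…,f_m, F₁,…,F_m ∈ C satisfy Σ_{t=1}^m f_t ⊗ F_t = Σ_{i=1}^k (g_i ⊗ h_i + h_i ⊗ g_i) in C⊗C, then for all u ∈ [0,1]: Σ_{t=1}^m ((d/du log f_t)(u)·log F_t(u) - log f_t(u)·(d/du log F_t)(u)) = 0. -/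
open MeasureTheory Real TensorProduct

/-- The multiplicative abelian group of positive-valued differentiable real functions. -/
def PD : Type := {f : ℝ → ℝ // (∀ x, 0 < f x) ∧ Differentiable ℝ f}

noncomputable instance : CommGroup PD where
  mul f g := ⟨fun x => f.1 x * g.1 x,
    fun x => mul_pos (f.2.1 x) (g.2.1 x), f.2.2.mul g.2.2⟩
  one := ⟨fun _ => 1, fun _ => one_pos, differentiable_const 1⟩
  inv f := ⟨fun x => (f.1 x)⁻¹,
    fun x => inv_pos.2 (f.2.1 x), f.2.2.inv fun x => (f.2.1 x).ne'⟩
  mul_assoc a b c := Subtype.ext (funext fun x => mul_assoc _ _ _)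
  one_mul a := Subtype.ext (funext fun x => one_mul _)
  mul_one a := Subtype.ext (funext fun x => mul_one _)
  inv_mul_cancel a := Subtype.ext (funext fun x => inv_mul_cancel₀ (a.2.1 x).ne')
  mul_comm a b := Subtype.ext (funext fun x => mul_comm _ _)

noncomputable def Lm (u : ℝ) (a : Additive PD) : ℝ := Real.log ((Additive.toMul a).1 u)

noncomputable def Dm (u : ℝ) (a : Additive PD) : ℝ :=
  deriv (fun x => Real.log ((Additive.toMul a).1 x)) u

lemma addMul (a b : Additive PD) (x : ℝ) :
    (Additive.toMul (a + b)).1 x = (Additive.toMul a).1 x * (Additive.toMul b).1 x := rfl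

lemma Lm_add (u : ℝ) (a b : Additive PD) : Lm u (a + b) = Lm u a + Lm u b := by
  unfold Lm
  rw [addMul]
  exact Real.log_mul ((Additive.toMul a).2.1 u).ne' ((Additive.toMul b).2.1 u).ne'

lemma diff_log (a : Additive PD) : Differentiable ℝ (fun x => Real.log ((Additive.toMul a).1 x)) :=
  fun x => ((Additive.toMul a).2.2 x).log ((Additive.toMul a).2.1 x).ne'

lemma Dm_add (u : ℝ) (a b : Additive PD) : Dm u (a + b) = Dm u a + Dm u b := by
  unfold Dm
  have : (fun x => Real.log ((Additive.toMul (a + b)).1 x)) =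
      fun x => Real.log ((Additive.toMul a).1 x) + Real.log ((Additive.toMul b).1 x) :=
    funext fun x => by
      rw [addMul]
      exact Real.log_mul ((Additive.toMul a).2.1 x).ne' ((Additive.toMul b).2.1 x).ne'
  rw [this, deriv_fun_add (diff_log a u) (diff_log b u)]

noncomputable def Bmap (u : ℝ) : Additive PD →ₗ[ℤ] Additive PD →ₗ[ℤ] ℝ :=
  AddMonoidHom.toIntLinearMap
    (AddMonoidHom.mk'
      (fun a => AddMonoidHom.toIntLinearMap
        (AddMonoidHom.mk' (fun b => Dm u a * Lm u b - Lm u a * Dm u b)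
          (by intro b c; simp only [Lm_add, Dm_add]; ring)))
      (by intro a b; ext c; simp only [AddMonoidHom.coe_toIntLinearMap, AddMonoidHom.mk'_apply,
            LinearMap.add_apply, Lm_add, Dm_add]; ring))

lemma Bmap_tmul (u : ℝ) (a b : Additive PD) :
    TensorProduct.lift (Bmap u) (a ⊗ₜ[ℤ] b) = Dm u a * Lm u b - Lm u a * Dm u b := by
  simp [Bmap, TensorProduct.lift.tmul]

theorem symmetric_tensor_gives_vanishing_derivative_sum
    (m k : ℕ) (f F : Fin m → PD) (g h : Fin k → PD)
    (hsym : ∑ t, (Additive.ofMul (f t)) ⊗ₜ[ℤ] (Additive.ofMul (F t)) =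
      ∑ i, ((Additive.ofMul (g i)) ⊗ₜ[ℤ] (Additive.ofMul (h i)) +
            (Additive.ofMul (h i)) ⊗ₜ[ℤ] (Additive.ofMul (g i)))) :
    ∀ u ∈ Set.Icc (0:ℝ) 1,
      ∑ t, (deriv (fun x => Real.log ((f t).1 x)) u * Real.log ((F t).1 u) -
            Real.log ((f t).1 u) * deriv (fun x => Real.log ((F t).1 x)) u) = 0 := by
  intro u _
  have key := congrArg (TensorProduct.lift (Bmap u)) hsym
  simp only [map_sum, map_add, Bmap_tmul] at key
  have : ∑ i, ((Dm u (Additive.ofMul (g i)) * Lm u (Additive.ofMul (h i)) -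
        Lm u (Additive.ofMul (g i)) * Dm u (Additive.ofMul (h i))) +
      (Dm u (Additive.ofMul (h i)) * Lm u (Additive.ofMul (g i)) -
        Lm u (Additive.ofMul (h i)) * Dm u (Additive.ofMul (g i)))) = 0 := by
    apply Finset.sum_eq_zero; intro i _; ring
  rw [this] at key
  exact key
end

section
/- Let B be an n×n integer matrix and R = diag(r₁,…,r_n) with r_i positive integers such that RB is skew-symmetric. Fix k ∈ {1,…,n} and positive integers d = (d_i). Define B' by b'_{ij} = -b_{ij} if i = k or j = k, and b'_{ij} = b_{ij} + d_k([-b_{ik}]₊ b_{kj} + b_{ik}[b_{kj}]₊) otherwise, where [a]₊ = max(a,0). Then RB' is also skew-symmetric. -/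
open Matrix

theorem generalized_mutation_preserves_skew_symmetrizer
    (n : ℕ) (B B' : Matrix (Fin n) (Fin n) ℤ)
    (r : Fin n → ℤ) (hr : ∀ i, 0 < r i)
    (hskew : (Matrix.diagonal r * B)ᵀ = -(Matrix.diagonal r * B))
    (k : Fin n) (d : Fin n → ℤ) (hd : ∀ i, 0 < d i)
    (hB' : ∀ i j, B' i j =
      if i = k ∨ j = k then -B i j
      else B i j + d k * (max (-B i k) 0 * B k j + B i k * max (B k j) 0)) :
    (Matrix.diagonal r * B')ᵀ = -(Matrix.diagonal r * B') := by
  have h : ∀ i j, r j * B j i = -(r i * B i j) := by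
    intro i j
    have := congrFun (congrFun hskew i) j
    simpa [Matrix.mul_apply, Matrix.diagonal_apply, Finset.mul_sum,
      Finset.sum_ite_eq, Matrix.transpose_apply] using this
  ext i j
  simp only [Matrix.transpose_apply, Matrix.neg_apply, Matrix.mul_apply,
    Matrix.diagonal_apply, ite_mul, zero_mul, Finset.sum_ite_eq,
    Finset.mem_univ, if_true]
  rw [hB' i j, hB' j i]
  by_cases hc : i = k ∨ j = k
  · rw [if_pos hc, if_pos (hc.symm)]
    have := h i j
    ring_nf
    linarith [h i j]
  · rw [if_neg hc, if_neg fun hh => hc hh.symm]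
    have h1 := h i j
    have h2 := h i k
    have h3 := h k j
    have hrk : (0:ℤ) ≤ r k := (hr k).le
    have m1 : r j * max (-B j k) 0 = r k * max (B k j) 0 := by
      rw [mul_max_of_nonneg _ _ (hr j).le, mul_max_of_nonneg _ _ hrk,
        mul_zero, mul_zero, mul_neg, h k j]
      ring_nf
    have m2 : r k * max (B k i) 0 = r i * max (-B i k) 0 := by
      rw [mul_max_of_nonneg _ _ hrk, mul_max_of_nonneg _ _ (hr i).le,
        mul_zero, mul_zero, h i k, mul_neg]
    linear_combination h1 + d k * B k i * m1 + d k * max (B k j) 0 * h2 +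
      d k * max (B k i) 0 * h3 - d k * B k j * m2
end
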